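/- Inefficient units keep their score under super-efficiency: Let n, m, s be positive natural numbers, x : Fin n → Fin m → ℝ and y : Fin n → Fin s → ℝ, and fix p : Fin n. Assume all inputs are nonnegative (∀ j i, x j i ≥ 0) and that there exists an input index i₀ with x p i₀ > 0. Define T_c = { θ : ℝ | ∃ λ : Fin n → ℝ, (∀ j, λ j ≥ 0) ∧ (∀ i : Fin m, Σ_j λ j · x j i ≤ θ · x p i) ∧ (∀ r : Fin s, Σ_j λ j · y j r ≥ y p r) } and T_s = { θ : ℝ | ∃ λ : Fin n → ℝ, λ p = 0 ∧ (∀ j, λ j ≥ 0) ∧ (∀ i : Fin m, Σ_j λ j · x j i ≤ θ · x p i) ∧ (∀ r : Fin s, Σ_j λ j · y j r ≥ y p r) }. If DMU_p is CCR-inefficient, i.e., there exists θ₀ ∈ T_c with θ₀ < 1, then sInf T_s = sInf T_c. -/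
import Mathlib


/-- Inefficient units keep their score under super-efficiency: if DMU `p` is
CCR-inefficient (some feasible objective value `θ₀ < 1` exists), then the optimal
values of the super-efficiency model and of the CCR model coincide. -/
theorem superEfficiency_score_eq_CCR_score_of_inefficient
    (n m s : ℕ) (hn : 0 < n) (hm : 0 < m) (hs : 0 < s)
    (x : Fin n → Fin m → ℝ) (y : Fin n → Fin s → ℝ) (p : Fin n)
    (hx : ∀ j i, x j i ≥ 0) (hxp : ∃ i₀ : Fin m, x p i₀ > 0)
    (Tc Ts : Set ℝ)
    (hTc : Tc = { θ : ℝ | ∃ lam : Fin n → ℝ,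
      (∀ j, lam j ≥ 0) ∧
      (∀ i : Fin m, ∑ j, lam j * x j i ≤ θ * x p i) ∧
      (∀ r : Fin s, ∑ j, lam j * y j r ≥ y p r) })
    (hTs : Ts = { θ : ℝ | ∃ lam : Fin n → ℝ, lam p = 0 ∧
      (∀ j, lam j ≥ 0) ∧
      (∀ i : Fin m, ∑ j, lam j * x j i ≤ θ * x p i) ∧
      (∀ r : Fin s, ∑ j, lam j * y j r ≥ y p r) })
    (hineff : ∃ θ₀ ∈ Tc, θ₀ < 1) :
    sInf Ts = sInf Tc := by
  obtain ⟨i₀, hi₀⟩ := hxp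
  subst hTc hTs
  -- every element of Tc is nonnegative
  have hnonneg : ∀ θ ∈ { θ : ℝ | ∃ lam : Fin n → ℝ,
      (∀ j, lam j ≥ 0) ∧
      (∀ i : Fin m, ∑ j, lam j * x j i ≤ θ * x p i) ∧
      (∀ r : Fin s, ∑ j, lam j * y j r ≥ y p r) }, 0 ≤ θ := by
    rintro θ ⟨lam, hnn, hxc, _⟩
    have h1 : (0:ℝ) ≤ ∑ j, lam j * x j i₀ :=
      Finset.sum_nonneg fun j _ => mul_nonneg (hnn j) (hx j i₀)
    have h2 := hxc i₀
    nlinarith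
  -- the key reduction: any θ < 1 in Tc yields θ' ≤ θ in Ts
  have key : ∀ θ ∈ { θ : ℝ | ∃ lam : Fin n → ℝ,
      (∀ j, lam j ≥ 0) ∧
      (∀ i : Fin m, ∑ j, lam j * x j i ≤ θ * x p i) ∧
      (∀ r : Fin s, ∑ j, lam j * y j r ≥ y p r) }, θ < 1 →
      ∃ θ' ∈ { θ : ℝ | ∃ lam : Fin n → ℝ, lam p = 0 ∧
      (∀ j, lam j ≥ 0) ∧
      (∀ i : Fin m, ∑ j, lam j * x j i ≤ θ * x p i) ∧
      (∀ r : Fin s, ∑ j, lam j * y j r ≥ y p r) }, θ' ≤ θ := by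
    rintro θ ⟨lam, hnn, hxc, hyc⟩ hθ1
    have ha0 : 0 ≤ lam p := hnn p
    have haθ : lam p ≤ θ := by
      have h1 : lam p * x p i₀ ≤ ∑ j, lam j * x j i₀ :=
        Finset.single_le_sum (f := fun j => lam j * x j i₀)
          (fun j _ => mul_nonneg (hnn j) (hx j i₀)) (Finset.mem_univ p)
      have h2 := hxc i₀
      nlinarith
    have ha1 : lam p < 1 := lt_of_le_of_lt haθ hθ1
    have hc : (0:ℝ) < 1 - lam p := by linarith
    set lam' : Fin n → ℝ := fun j => (lam j - if j = p then lam p else 0) / (1 - lam p) with hlam'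
    have hsum : ∀ f : Fin n → ℝ,
        ∑ j, lam' j * f j = (∑ j, lam j * f j - lam p * f p) / (1 - lam p) := by
      intro f
      have step : ∀ j : Fin n, lam' j * f j =
          (lam j * f j) / (1 - lam p) - (if j = p then lam p * f p / (1 - lam p) else 0) := by
        intro j
        by_cases h : j = p
        · rw [h]
          simp only [hlam', if_true]
          ring
        · simp only [hlam', if_neg h]; ring
      rw [Finset.sum_congr rfl fun j _ => step j, Finset.sum_sub_distrib,
        Finset.sum_ite_eq' Finset.univ p (fun _ => lam p * f p / (1 - lam p))]
      simp only [Finset.mem_univ, if_true]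
      rw [← Finset.sum_div]
      ring
    refine ⟨(θ - lam p) / (1 - lam p), ⟨lam', ?_, ?_, ?_, ?_⟩, ?_⟩
    · simp [hlam']
    · intro j
      by_cases h : j = p
      · subst h; simp [hlam']
      · simp only [hlam', if_neg h, sub_zero]
        exact div_nonneg (hnn j) (le_of_lt hc)
    · intro i
      rw [hsum, div_mul_eq_mul_div, div_le_div_iff_of_pos_right hc]
      nlinarith [hxc i]
    · intro r
      rw [hsum, ge_iff_le, le_div_iff₀ hc]
      have := hyc r
      nlinarith
    · rw [div_le_iff₀ hc]
      nlinarith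
  obtain ⟨θ₀, hθ₀, hθ₀1⟩ := hineff
  obtain ⟨θ₁, hθ₁s, hθ₁le⟩ := key θ₀ hθ₀ hθ₀1
  have hsub : { θ : ℝ | ∃ lam : Fin n → ℝ, lam p = 0 ∧
      (∀ j, lam j ≥ 0) ∧
      (∀ i : Fin m, ∑ j, lam j * x j i ≤ θ * x p i) ∧
      (∀ r : Fin s, ∑ j, lam j * y j r ≥ y p r) } ⊆
      { θ : ℝ | ∃ lam : Fin n → ℝ,
      (∀ j, lam j ≥ 0) ∧
      (∀ i : Fin m, ∑ j, lam j * x j i ≤ θ * x p i) ∧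
      (∀ r : Fin s, ∑ j, lam j * y j r ≥ y p r) } := by
    rintro θ ⟨lam, _, h1, h2, h3⟩; exact ⟨lam, h1, h2, h3⟩
  have hbddc : BddBelow { θ : ℝ | ∃ lam : Fin n → ℝ,
      (∀ j, lam j ≥ 0) ∧
      (∀ i : Fin m, ∑ j, lam j * x j i ≤ θ * x p i) ∧
      (∀ r : Fin s, ∑ j, lam j * y j r ≥ y p r) } := ⟨0, hnonneg⟩
  have hbdds := hbddc.mono hsub
  apply le_antisymm
  · apply le_csInf ⟨θ₀, hθ₀⟩
    intro θ hθ
    rcases lt_or_ge θ 1 with h | h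
    · obtain ⟨θ', hθ's, hθ'le⟩ := key θ hθ h
      exact le_trans (csInf_le hbdds hθ's) hθ'le
    · calc sInf _ ≤ θ₁ := csInf_le hbdds hθ₁s
        _ ≤ θ₀ := hθ₁le
        _ ≤ θ := by linarith
  · exact csInf_le_csInf hbddc ⟨θ₁, hθ₁s⟩ hsub
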